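/- Let R = ℂ[x,y,z,u,v,w,t] and f = x² + u·y² + 2v·y·z + w·z² + (u·w − v²)·t². Define the 4×4 matrices Ψ with rows (−x−tv, y, −z, t), (−uy−2vz, −x+tv, tu, z), (wz, −tw, −x−tv, y), (−tuw, −wz, −uy−2vz, −x+tv), and Ψ⁺ with rows (−x+tv, −y, z, −t), (2vz+uy, −x−tv, −tu, −z), (−wz, tw, −x+tv, −y), (tuw, wz, 2vz+uy, −x−tv). Then Ψ·Ψ⁺ = f·I₄. -/

import Mathlib

/-!
Both matrices are `-x` plus or minus the same `x`-free matrix `M` (`psiTail`):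
`Ψ = M - x·I₄` and `Ψ⁺ = -M - x·I₄`. Hence `Ψ·Ψ⁺ = x²·I₄ - M²`, and `M` squares to
`-(u y² + 2v y z + w z² + (u w - v²) t²)·I₄ = (x² - f)·I₄`.
-/

noncomputable section
open MvPolynomial

abbrev R0 : Type := MvPolynomial (Fin 7) ℂ

def px : R0 := X 0
def py : R0 := X 1
def pz : R0 := X 2
def pu : R0 := X 3
def pv : R0 := X 4
def pw : R0 := X 5
def pt : R0 := X 6

def f0 : R0 := px^2 + pu*py^2 + 2*pv*py*pz + pw*pz^2 + (pu*pw - pv^2)*pt^2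

def Psi : Matrix (Fin 4) (Fin 4) R0 :=
  !![-px - pt*pv, py, -pz, pt;
     -pu*py - 2*pv*pz, -px + pt*pv, pt*pu, pz;
     pw*pz, -pt*pw, -px - pt*pv, py;
     -pt*pu*pw, -pw*pz, -pu*py - 2*pv*pz, -px + pt*pv]

def PsiP : Matrix (Fin 4) (Fin 4) R0 :=
  !![-px + pt*pv, -py, pz, -pt;
     2*pv*pz + pu*py, -px - pt*pv, -pt*pu, -pz;
     -pw*pz, pt*pw, -px + pt*pv, -py;
     pt*pu*pw, pw*pz, 2*pv*pz + pu*py, -px - pt*pv]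

theorem Commute.sub_mul_neg_sub {A : Type*} [Ring A] {a b : A} (h : Commute a b) :
    (b - a) * (-b - a) = a * a - b * b := by
  rw [h.mul_self_sub_mul_self_eq', show -b - a = -(b + a) by abel, mul_neg, ← neg_mul, neg_sub,
    add_comm b a]

def psiTail : Matrix (Fin 4) (Fin 4) R0 :=
  !![-pt*pv, py, -pz, pt;
     -pu*py - 2*pv*pz, pt*pv, pt*pu, pz;
     pw*pz, -pt*pw, -pt*pv, py;
     -pt*pu*pw, -pw*pz, -pu*py - 2*pv*pz, pt*pv]

theorem psi_eq_psiTail_sub : Psi = psiTail - px • 1 := by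
  refine Matrix.ext fun i j => ?_
  fin_cases i <;> fin_cases j <;> simp [Psi, psiTail] <;> ring

theorem psiPlus_eq_neg_psiTail_sub : PsiP = -psiTail - px • 1 := by
  refine Matrix.ext fun i j => ?_
  fin_cases i <;> fin_cases j <;> simp [PsiP, psiTail] <;> ring

theorem psiTail_mul_self : psiTail * psiTail = (px ^ 2 - f0) • 1 := by
  refine Matrix.ext fun i j => ?_
  fin_cases i <;> fin_cases j <;>
    simp [psiTail, f0, Matrix.mul_apply, Fin.sum_univ_succ] <;> ring

/-- The matrix factorisation presenting the MCM modules `N₂`, `N₂⁺`: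
`Ψ·Ψ⁺ = f·I₄`. -/
theorem psi_mul_psiPlus :
    Psi * PsiP = f0 • (1 : Matrix (Fin 4) (Fin 4) R0) := by
  have hcomm : Commute (px • 1 : Matrix (Fin 4) (Fin 4) R0) psiTail :=
    (Commute.one_left psiTail).smul_left px
  rw [psi_eq_psiTail_sub, psiPlus_eq_neg_psiTail_sub, hcomm.sub_mul_neg_sub, psiTail_mul_self,
    smul_mul_smul, one_mul, ← sub_smul, ← sq, sub_sub_cancel]

end
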